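/- arXiv:2109.12455 — 7 statements merged into one kernel-verified Lean document; each statement's English description precedes it below -/
import Mathlib

section
/- The total number of valleys (a down-step immediately followed by an up-step) across all Dyck paths of semilength n equals binomial(2n-1, n+1). -/
/-- Number of valleys (a down-step `false` immediately followed by an up-step `true`)
in a UD word. -/
def dyckValleys (w : List Bool) : ℕ := (w.zip w.tail).count (false, true)

/-- A word over `{U, D}` (with `true` = up-step, `false` = down-step) is a Dyck word
if it has equally many up- and down-steps and every prefix has at least as many
up-steps as down-steps. -/
def IsDyckWord (w : List Bool) : Prop :=
  w.count false = w.count true ∧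
    ∀ m : ℕ, (w.take m).count false ≤ (w.take m).count true

/-!
A nonempty Dyck word starts with an up-step and ends with a down-step, so it has exactly one
more peak `UD` than valleys `DU`. Peaks are counted position by position: deleting the peak at
position `i ≤ 2n` of a Dyck word of semilength `n + 1` is a bijection onto the Dyck words of
semilength `n`. Hence all Dyck words of semilength `n + 1` have `(2n + 1) C_n` peaks in total,
and `(2n + 1) C_n - C_{n+1} = binom(2n + 1, n + 2)` valleys.
-/

open Finset

theorem two_mul_add_one_mul_catalan (m : ℕ) :
    (2 * m + 1) * catalan m = (2 * m + 1).choose (m + 1) := by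
  apply Nat.eq_of_mul_eq_mul_left (Nat.succ_pos m)
  calc (m + 1) * ((2 * m + 1) * catalan m) = (2 * m + 1) * ((m + 1) * catalan m) := by ring
    _ = (2 * m + 1) * (2 * m).choose m := by
      rw [succ_mul_catalan_eq_centralBinom, Nat.centralBinom]
    _ = (m + 1) * (2 * m + 1).choose (m + 1) := by rw [Nat.add_one_mul_choose_eq]; ring

theorem choose_two_mul_add_one_eq_add_catalan (m : ℕ) :
    (2 * m + 1).choose (m + 1) = (2 * m + 1).choose (m + 2) + catalan (m + 1) := by
  apply Nat.eq_of_mul_eq_mul_left (show 0 < m + 2 by omega)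
  have hchoose := Nat.choose_succ_right_eq (2 * m + 1) (m + 1)
  have hcatalan := succ_mul_catalan_eq_centralBinom (m + 1)
  rw [Nat.centralBinom, show 2 * (m + 1) = 2 * m + 1 + 1 by ring, Nat.choose_succ_succ,
    ← Nat.choose_symm_half] at hcatalan
  rw [show 2 * m + 1 - (m + 1) = m by omega] at hchoose
  linarith

namespace List

variable {α : Type*}

theorem count_zip_tail_eq_card [DecidableEq α] (a b : α) :
    ∀ l : List α, (l.zip l.tail).count (a, b) =
      #{i ∈ Finset.range (l.length - 1) | l[i]? = some a ∧ l[i + 1]? = some b}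
  | [] => by simp
  | [x] => by simp
  | x :: y :: t => by
    have ih := count_zip_tail_eq_card a b (y :: t)
    rw [card_filter] at ih ⊢
    rw [length_cons, length_cons, Nat.add_sub_cancel, Finset.sum_range_succ']
    simp only [getElem?_cons_succ, tail_cons, length_cons, Nat.add_sub_cancel, zip_cons_cons,
      count_cons] at ih ⊢
    rw [← ih]
    simp [Prod.ext_iff]

theorem take_append_cons_cons_drop {l : List α} {i : ℕ} {a b : α} (ha : l[i]? = some a)
    (hb : l[i + 1]? = some b) : l.take i ++ a :: b :: l.drop (i + 2) = l := by
  obtain ⟨hi, rfl⟩ := getElem?_eq_some_iff.1 ha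
  obtain ⟨hi', rfl⟩ := getElem?_eq_some_iff.1 hb
  rw [← drop_eq_getElem_cons, ← drop_eq_getElem_cons, take_append_drop]

theorem forall_take_append_iff (P : List α → Prop) (a b : List α) :
    (∀ m, P ((a ++ b).take m)) ↔
      (∀ m ≤ a.length, P (a.take m)) ∧ ∀ k, P (a ++ b.take k) := by
  refine ⟨fun h => ⟨fun m hm => ?_, fun k => ?_⟩, fun ⟨ha, hb⟩ m => ?_⟩
  · simpa [take_append_of_le_length hm] using h m
  · simpa [take_length_add_append] using h (a.length + k)
  · rcases le_or_gt m a.length with hm | hm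
    · rw [take_append_of_le_length hm]
      exact ha m hm
    · obtain ⟨k, rfl⟩ := Nat.exists_eq_add_of_le hm.le
      rw [take_length_add_append]
      exact hb k

end List

def dyckPeaks (w : List Bool) : ℕ := (w.zip w.tail).count (true, false)

theorem dyckPeaks_add_ite_eq_dyckValleys_add_ite :
    ∀ w : List Bool, dyckPeaks w + (if w.getLast? = some true then 1 else 0) =
      dyckValleys w + (if w.head? = some true then 1 else 0)
  | [] => by simp [dyckPeaks, dyckValleys]
  | [x] => by cases x <;> simp [dyckPeaks, dyckValleys]
  | x :: y :: t => by
    have ih := dyckPeaks_add_ite_eq_dyckValleys_add_ite (y :: t)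
    simp only [dyckPeaks, dyckValleys, List.tail_cons, List.zip_cons_cons, List.count_cons,
      List.getLast?_cons_cons, List.head?_cons] at *
    cases x <;> cases y <;> simp at ih ⊢ <;> omega

namespace IsDyckWord

variable {w : List Bool}

theorem head?_eq (h : IsDyckWord w) (hw : w ≠ []) : w.head? = some true := by
  obtain ⟨b, t, rfl⟩ := List.exists_cons_of_ne_nil hw
  have h1 := h.2 1
  cases b <;> simp_all

theorem getLast?_eq (h : IsDyckWord w) (hw : w ≠ []) : w.getLast? = some false := by
  obtain ⟨v, b, rfl⟩ := (List.eq_nil_or_concat w).resolve_left hw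
  have hbal := h.1
  have hv := h.2 v.length
  cases b <;> simp_all

theorem dyckPeaks_eq_dyckValleys_add_one (h : IsDyckWord w) (hw : w ≠ []) :
    dyckPeaks w = dyckValleys w + 1 := by
  simpa [h.head?_eq hw, h.getLast?_eq hw] using dyckPeaks_add_ite_eq_dyckValleys_add_ite w

theorem two_mul_count_true (h : IsDyckWord w) : 2 * w.count true = w.length := by
  have := List.count_true_add_count_false w
  have := h.1
  omega

end IsDyckWord

theorem isDyckWord_append_cons_true_cons_false_iff (a b : List Bool) :
    IsDyckWord (a ++ true :: false :: b) ↔ IsDyckWord (a ++ b) := by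
  simp only [IsDyckWord,
    List.forall_take_append_iff (fun p : List Bool => p.count false ≤ p.count true)]
  refine and_congr (by simp [← add_assoc]) <|
    and_congr_right fun _ => ⟨fun h k => ?_, fun h k => ?_⟩
  · simpa [← add_assoc] using h (k + 2)
  · rcases k with _ | _ | k
    · simpa using h 0
    · simpa using (h 0).step
    · simpa [← add_assoc] using h k

@[simps]
def boolEquivDyckStep : Bool ≃ DyckStep where
  toFun b := cond b .U .D
  invFun s := s == .U
  left_inv b := by cases b <;> rfl
  right_inv s := by cases s <;> rfl

theorem count_map_boolEquivDyckStep_U (l : List Bool) :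
    (l.map boolEquivDyckStep).count .U = l.count true :=
  List.count_map_of_injective l _ boolEquivDyckStep.injective true

theorem count_map_boolEquivDyckStep_D (l : List Bool) :
    (l.map boolEquivDyckStep).count .D = l.count false :=
  List.count_map_of_injective l _ boolEquivDyckStep.injective false

theorem isDyckWord_iff_map (l : List Bool) :
    IsDyckWord l ↔ (l.map boolEquivDyckStep).count .U = (l.map boolEquivDyckStep).count .D ∧
      ∀ i, ((l.map boolEquivDyckStep).take i).count .D ≤
        ((l.map boolEquivDyckStep).take i).count .U := by
  simp only [IsDyckWord, ← List.map_take, count_map_boolEquivDyckStep_U,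
    count_map_boolEquivDyckStep_D, eq_comm]

def IsDyckWord.toDyckWord {l : List Bool} (h : IsDyckWord l) : DyckWord :=
  ⟨l.map boolEquivDyckStep, ((isDyckWord_iff_map l).1 h).1, ((isDyckWord_iff_map l).1 h).2⟩

theorem isDyckWord_map_symm (p : DyckWord) :
    IsDyckWord (p.toList.map boolEquivDyckStep.symm) :=
  (isDyckWord_iff_map _).2 <| by
    simpa [List.map_map] using ⟨p.count_U_eq_count_D, p.count_D_le_count_U⟩

open scoped Classical in
noncomputable def dyckSet (n : ℕ) : Finset (List Bool) :=
  (Finset.univ.filter fun w : Fin (2 * n) → Bool => IsDyckWord (List.ofFn w)).image List.ofFn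

theorem mem_dyckSet {n : ℕ} {l : List Bool} :
    l ∈ dyckSet n ↔ l.length = 2 * n ∧ IsDyckWord l := by
  rw [dyckSet]
  generalize 2 * n = k
  simp only [mem_image, mem_filter, mem_univ, true_and]
  constructor
  · rintro ⟨w, hw, rfl⟩
    exact ⟨List.length_ofFn, hw⟩
  · rintro ⟨rfl, hl⟩
    exact ⟨fun i => l[(i : ℕ)], by rwa [List.ofFn_getElem], List.ofFn_getElem⟩

def dyckSetEquiv (n : ℕ) : dyckSet n ≃ {p : DyckWord // p.semilength = n} where
  toFun l := ⟨(mem_dyckSet.1 l.2).2.toDyckWord, by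
    obtain ⟨hlen, hl⟩ := mem_dyckSet.1 l.2
    have := hl.two_mul_count_true
    simp only [DyckWord.semilength, IsDyckWord.toDyckWord, count_map_boolEquivDyckStep_U]
    omega⟩
  invFun p := ⟨p.1.toList.map boolEquivDyckStep.symm, mem_dyckSet.2
    ⟨by simp [← p.1.two_mul_semilength_eq_length, p.2], isDyckWord_map_symm p.1⟩⟩
  left_inv l := by ext1; simp [IsDyckWord.toDyckWord]
  right_inv p := by ext1; ext1; simp [IsDyckWord.toDyckWord]

theorem card_dyckSet (n : ℕ) : #(dyckSet n) = catalan n := by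
  rw [← DyckWord.card_dyckWord_semilength_eq_catalan, ← Fintype.card_coe]
  exact Fintype.card_congr (dyckSetEquiv n)

theorem card_dyckSet_filter_peak (n : ℕ) {i : ℕ} (hi : i ≤ 2 * n) :
    #{l ∈ dyckSet (n + 1) | l[i]? = some true ∧ l[i + 1]? = some false} = catalan n := by
  rw [← card_dyckSet n]
  refine card_nbij' (fun l => l.take i ++ l.drop (i + 2))
    (fun v => v.take i ++ true :: false :: v.drop i) ?_ ?_ ?_ ?_
  · intro l hl
    simp only [coe_filter, Set.mem_ofPred_eq, mem_coe, mem_dyckSet] at hl ⊢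
    obtain ⟨⟨hlen, hl⟩, htrue, hfalse⟩ := hl
    rw [← List.take_append_cons_cons_drop htrue hfalse,
      isDyckWord_append_cons_true_cons_false_iff] at hl
    exact ⟨by simp; omega, hl⟩
  · intro v hv
    simp only [coe_filter, Set.mem_ofPred_eq, mem_coe, mem_dyckSet] at hv ⊢
    obtain ⟨hlen, hv⟩ := hv
    have h : (v.take i).length = i := List.length_take_of_le (by omega)
    refine ⟨⟨by simp; omega, ?_⟩, by simp [h], by simp [h]⟩
    rwa [isDyckWord_append_cons_true_cons_false_iff, List.take_append_drop]
  · intro l hl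
    simp only [coe_filter, Set.mem_ofPred_eq, mem_dyckSet] at hl
    obtain ⟨⟨hlen, -⟩, htrue, hfalse⟩ := hl
    have h : (l.take i).length = i := List.length_take_of_le (by omega)
    simpa [List.take_left' h, List.drop_left' h] using List.take_append_cons_cons_drop htrue hfalse
  · intro v hv
    have h : (v.take i).length = i := List.length_take_of_le (by simp [(mem_dyckSet.1 hv).1]; omega)
    simp [List.take_left' h, List.drop_append, List.drop_take, h]

theorem sum_dyckPeaks_dyckSet (n : ℕ) :
    ∑ l ∈ dyckSet (n + 1), dyckPeaks l = (2 * n + 1) * catalan n := by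
  calc ∑ l ∈ dyckSet (n + 1), dyckPeaks l
      = ∑ l ∈ dyckSet (n + 1),
          #{i ∈ range (2 * n + 1) | l[i]? = some true ∧ l[i + 1]? = some false} :=
        sum_congr rfl fun l hl => by
          rw [dyckPeaks, List.count_zip_tail_eq_card, (mem_dyckSet.1 hl).1,
            show 2 * (n + 1) - 1 = 2 * n + 1 by omega]
    _ = ∑ i ∈ range (2 * n + 1),
          #{l ∈ dyckSet (n + 1) | l[i]? = some true ∧ l[i + 1]? = some false} :=
        sum_card_bipartiteAbove_eq_sum_card_bipartiteBelow _
    _ = (2 * n + 1) * catalan n := by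
      rw [sum_congr rfl fun i hi => card_dyckSet_filter_peak n (by simp at hi; omega)]
      simp

open scoped Classical in
theorem total_valleys_eq_general (n : ℕ) :
    ∑ w ∈ Finset.univ.filter (fun w : Fin (2 * n) → Bool => IsDyckWord (List.ofFn w)),
      dyckValleys (List.ofFn w) = (2 * n - 1).choose (n + 1) := by
  rcases n with _ | m
  · simp [dyckValleys]
  rw [← sum_image (f := dyckValleys) fun _ _ _ _ h => List.ofFn_injective h]
  change ∑ l ∈ dyckSet (m + 1), dyckValleys l = _
  have hpeaks : ∑ l ∈ dyckSet (m + 1), dyckPeaks l =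
      ∑ l ∈ dyckSet (m + 1), dyckValleys l + catalan (m + 1) := by
    rw [← card_dyckSet, card_eq_sum_ones, ← sum_add_distrib]
    refine sum_congr rfl fun l hl => ?_
    obtain ⟨hlen, hl⟩ := mem_dyckSet.1 hl
    exact hl.dyckPeaks_eq_dyckValleys_add_one (List.ne_nil_of_length_pos (by omega))
  rw [sum_dyckPeaks_dyckSet, two_mul_add_one_mul_catalan,
    choose_two_mul_add_one_eq_add_catalan] at hpeaks
  rw [show 2 * (m + 1) - 1 = 2 * m + 1 by omega, show m + 1 + 1 = m + 2 from rfl]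
  omega

open scoped Classical in
/-- The total number of valleys across all Dyck paths of semilength `n` is
`binomial (2n-1) (n+1)`. -/
theorem total_valleys_eq (n : ℕ) (hn : 1 ≤ n) :
    ∑ w ∈ Finset.univ.filter (fun w : Fin (2 * n) → Bool => IsDyckWord (List.ofFn w)),
      dyckValleys (List.ofFn w) = (2 * n - 1).choose (n + 1) :=
  total_valleys_eq_general n
end

section
/- For all n ≥ 2, binomial(2n-2, n-2) = sum over all nonnegative integer quadruples (a,b,c,d) with a+b+c+d = n-2 of binomial(a+c, a) · C_{a+b+1, a+1} · C_{c+d+1, c+1}, where C_{m,k} = (k/(2m-k)) · binomial(2m-k, m) is the Catalan convolution. -/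
/-- The Catalan convolution `C_{m,k} = (k/(2m-k)) · binomial(2m-k, m)`. -/
def catalanConv (m k : ℕ) : ℚ := (k : ℚ) / ((2 * m - k : ℕ) : ℚ) * ((2 * m - k).choose m : ℚ)

/-!
For the Catalan series `C = 1 + x C²`, `C_{b+a+1, a+1}` is the coefficient of `x^b` in `C^(a+1)`
(the ballot formula). Grouping the quadruples by `i = a + c`, the sum over `b + d` is a coefficient
of `C^(a+1) C^(c+1) = C^(i+2)` and the sum over `a` of `binomial(i, a)` is `2^i`, leaving
`∑ᵢ 2^i [x^(N-i)] C^(i+2) = [x^N] C² / (1 - 2xC) = [x^N] C² / √(1 - 4x) = binomial(2N+2, N)`.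
Each generating-function identity is proved by induction from `C^(k+1) = C^k + x C^(k+2)`.
-/

open Finset

/-- The coefficient of `x^m` in `C(x)^k`, computed by the recursion `C^(k+1) = C^k + x C^(k+2)`. -/
def catalanPowCoeff : ℕ → ℕ → ℕ
  | 0, _ => 1
  | _ + 1, 0 => 0
  | m + 1, k + 1 => catalanPowCoeff (m + 1) k + catalanPowCoeff m (k + 2)
termination_by m k => (m, k)

namespace catalanPowCoeff

@[simp] lemma zero_left (k : ℕ) : catalanPowCoeff 0 k = 1 := by
  rw [catalanPowCoeff]

@[simp] lemma succ_zero (m : ℕ) : catalanPowCoeff (m + 1) 0 = 0 := by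
  rw [catalanPowCoeff]

lemma succ_succ (m k : ℕ) :
    catalanPowCoeff (m + 1) (k + 1) = catalanPowCoeff (m + 1) k + catalanPowCoeff m (k + 2) := by
  rw [catalanPowCoeff]

lemma mul_eq_mul_choose (m k : ℕ) :
    (2 * m + k) * catalanPowCoeff m k = k * (2 * m + k).choose m := by
  induction m generalizing k with
  | zero => simp
  | succ m ihm =>
    induction k with
    | zero => simp
    | succ k ihk =>
      have h₁ := ihk
      have h₂ := ihm (k + 2)
      have hsymm := Nat.choose_succ_right_eq (2 * m + k + 2) m
      rw [show 2 * (m + 1) + k = 2 * m + k + 2 by omega] at h₁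
      rw [show 2 * m + (k + 2) = 2 * m + k + 2 by omega] at h₂
      rw [show 2 * m + k + 2 - m = m + k + 2 by omega] at hsymm
      refine Nat.eq_of_mul_eq_mul_left (by positivity : 0 < (2 * m + k + 2) * (m + 1)) ?_
      rw [succ_succ, show 2 * (m + 1) + (k + 1) = 2 * m + k + 2 + 1 by omega, Nat.choose_succ_succ]
      zify at h₁ h₂ hsymm ⊢
      linear_combination ((m : ℤ) + 1) * (2 * m + k + 3) * (h₁ + h₂) + (-2 * (m + 1)) * hsymm

lemma sum_antidiagonal_mul (M p q : ℕ) :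
    ∑ x ∈ antidiagonal M, catalanPowCoeff x.1 p * catalanPowCoeff x.2 q =
      catalanPowCoeff M (p + q) := by
  induction M generalizing p with
  | zero => simp
  | succ M ihM =>
    induction p with
    | zero => simp [Nat.sum_antidiagonal_succ]
    | succ p ihp =>
      rw [Nat.sum_antidiagonal_succ] at ihp ⊢
      simp only [succ_succ, add_mul, sum_add_distrib, zero_left, ihM] at ihp ⊢
      rw [← add_assoc, ihp, Nat.add_right_comm p 1 q, succ_succ, Nat.add_right_comm p 2 q]

lemma sum_antidiagonal_two_pow_mul (N k : ℕ) :
    ∑ x ∈ antidiagonal N, 2 ^ x.1 * catalanPowCoeff x.2 (x.1 + k) = (2 * N + k).choose N := by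
  induction N generalizing k with
  | zero => simp
  | succ N ihN =>
    induction k with
    | zero =>
      rw [Nat.sum_antidiagonal_succ]
      simp only [pow_succ, mul_assoc, add_zero, succ_zero, mul_zero, zero_add, mul_left_comm _ 2,
        ← mul_sum, ihN 1]
      rw [show 2 * (N + 1) = 2 * N + 1 + 1 by ring, Nat.choose_succ_succ, Nat.choose_symm_half]
      ring
    | succ k ihk =>
      rw [Nat.sum_antidiagonal_succ'] at ihk ⊢
      simp only [← add_assoc, succ_succ, mul_add, sum_add_distrib, zero_left] at ihk ⊢
      have h := ihN (k + 2)
      simp only [← add_assoc] at h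
      rw [ihk, h, show 2 * N + 2 * 1 + k = 2 * N + k + 2 by ring,
        Nat.choose_succ_succ' (2 * N + k + 2) N, add_comm]

end catalanPowCoeff

lemma Finset.Nat.sum_antidiagonal_choose (n : ℕ) :
    ∑ x ∈ antidiagonal n, (x.1 + x.2).choose x.1 = 2 ^ n := by
  rw [← Nat.sum_antidiagonal_subst (f := fun x m => m.choose x.1),
    Nat.sum_antidiagonal_eq_sum_range_succ_mk, Nat.sum_range_choose]

lemma Finset.Nat.sum_antidiagonalTuple_four {M : Type*} [AddCommMonoid M] (N : ℕ)
    (f : ℕ → ℕ → ℕ → ℕ → M) :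
    ∑ t ∈ antidiagonalTuple 4 N, f (t 0) (t 1) (t 2) (t 3) =
      ∑ p ∈ antidiagonal N, ∑ x ∈ antidiagonal p.1, ∑ y ∈ antidiagonal p.2, f x.1 y.1 x.2 y.2 := by
  have hsigma : ∑ p ∈ antidiagonal N, ∑ x ∈ antidiagonal p.1, ∑ y ∈ antidiagonal p.2,
      f x.1 y.1 x.2 y.2 =
        ∑ s ∈ (antidiagonal N).sigma fun p => antidiagonal p.1 ×ˢ antidiagonal p.2,
          f s.2.1.1 s.2.2.1 s.2.1.2 s.2.2.2 := by
    rw [sum_sigma]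
    simp_rw [sum_product]
  rw [hsigma]
  refine sum_nbij' (fun t => ⟨(t 0 + t 2, t 1 + t 3), ((t 0, t 2), (t 1, t 3))⟩)
    (fun s => ![s.2.1.1, s.2.2.1, s.2.1.2, s.2.2.2]) ?_ ?_ ?_ ?_ (fun _ _ => rfl)
  · intro t ht
    simp only [mem_antidiagonalTuple, Fin.sum_univ_four] at ht
    simp only [mem_sigma, mem_product, HasAntidiagonal.mem_antidiagonal, and_true]
    omega
  · rintro ⟨⟨i, j⟩, ⟨a, c⟩, ⟨b, d⟩⟩ h
    simp only [mem_sigma, mem_product, HasAntidiagonal.mem_antidiagonal] at h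
    simp only [mem_antidiagonalTuple, Fin.sum_univ_four, Matrix.cons_val_zero, Matrix.cons_val_one,
      Matrix.cons_val]
    omega
  · intro t _
    ext i
    fin_cases i <;> rfl
  · rintro ⟨⟨i, j⟩, ⟨a, c⟩, ⟨b, d⟩⟩ h
    simp only [mem_sigma, mem_product, HasAntidiagonal.mem_antidiagonal] at h
    obtain ⟨rfl, rfl, rfl⟩ := h
    rfl

theorem sum_antidiagonalTuple_choose_mul_catalanPowCoeff (N : ℕ) :
    ∑ t ∈ Nat.antidiagonalTuple 4 N, (t 0 + t 2).choose (t 0) *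
      catalanPowCoeff (t 1) (t 0 + 1) * catalanPowCoeff (t 3) (t 2 + 1) = (2 * N + 2).choose N := by
  rw [Nat.sum_antidiagonalTuple_four N
    fun a b c d => (a + c).choose a * catalanPowCoeff b (a + 1) * catalanPowCoeff d (c + 1)]
  calc _ = ∑ p ∈ antidiagonal N, ∑ x ∈ antidiagonal p.1,
        (x.1 + x.2).choose x.1 * catalanPowCoeff p.2 (p.1 + 2) := by
        refine sum_congr rfl fun p _ => sum_congr rfl fun x hx => ?_
        rw [HasAntidiagonal.mem_antidiagonal] at hx
        simp_rw [mul_assoc, ← mul_sum, catalanPowCoeff.sum_antidiagonal_mul]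
        rw [show x.1 + 1 + (x.2 + 1) = p.1 + 2 by omega]
    _ = ∑ p ∈ antidiagonal N, 2 ^ p.1 * catalanPowCoeff p.2 (p.1 + 2) := by
        simp_rw [← sum_mul, Nat.sum_antidiagonal_choose]
    _ = _ := catalanPowCoeff.sum_antidiagonal_two_pow_mul N 2

lemma catalanConv_add_add_one (k m : ℕ) :
    catalanConv (k + m + 1) (k + 1) = catalanPowCoeff m (k + 1) := by
  have h := catalanPowCoeff.mul_eq_mul_choose m (k + 1)
  rw [catalanConv, show 2 * (k + m + 1) - (k + 1) = 2 * m + (k + 1) by omega,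
    Nat.choose_symm_of_eq_add (by omega : 2 * m + (k + 1) = k + m + 1 + m),
    div_mul_eq_mul_div, div_eq_iff (by positivity)]
  exact_mod_cast h.symm.trans (mul_comm _ _)

theorem catalanConv_interleaving_identity (n : ℕ) (hn : 2 ≤ n) :
    ((2 * n - 2).choose (n - 2) : ℚ) =
      ∑ t ∈ Finset.Nat.antidiagonalTuple 4 (n - 2),
        ((t 0 + t 2).choose (t 0) : ℚ) *
          catalanConv (t 0 + t 1 + 1) (t 0 + 1) *
          catalanConv (t 2 + t 3 + 1) (t 2 + 1) := by
  simp_rw [catalanConv_add_add_one]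
  rw [show 2 * n - 2 = 2 * (n - 2) + 2 by omega]
  exact_mod_cast (sum_antidiagonalTuple_choose_mul_catalanPowCoeff (n - 2)).symm
end

section
/- If the sequence V_n satisfies V_0 = 0 and, for n ≥ 1, V_n = 2·sum_{j=0}^{n-1} V_j · C_{n-1-j} + C_n - C_{n-1}, where C_m is the m-th Catalan number, then V_n = binomial(2n-1, n+1) for all n ≥ 1. -/
open Finset

lemma key1 (m : ℕ) : 2 * ((2*m+1).choose (m+2)) = m * catalan (m+1) := by
  have h1 := Nat.choose_succ_right_eq (2*m+1) (m+1)
  have hsub : 2*m+1 - (m+1) = m := by omega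
  rw [hsub] at h1
  have h2 := Nat.choose_symm_half m
  have h3 : Nat.centralBinom (m+1) = 2 * (2*m+1).choose (m+1) := by
    have h : 2*(m+1) = (2*m+1)+1 := by ring
    rw [Nat.centralBinom, h, Nat.choose_succ_succ, h2]; ring
  have h4 := succ_mul_catalan_eq_centralBinom (m+1)
  apply Nat.eq_of_mul_eq_mul_right (show 0 < m+2 by omega)
  calc 2 * (2*m+1).choose (m+2) * (m+2)
      = 2 * ((2*m+1).choose (m+1+1) * (m+1+1)) := by ring_nf
    _ = 2 * ((2*m+1).choose (m+1) * m) := by rw [h1]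
    _ = m * (2 * (2*m+1).choose (m+1)) := by ring
    _ = m * Nat.centralBinom (m+1) := by rw [h3]
    _ = m * ((m+1+1) * catalan (m+1)) := by rw [h4]
    _ = m * catalan (m+1) * (m+2) := by ring

lemma key1' (m : ℕ) : 2 * (((2*m+1).choose (m+2)) : ℤ) = m * catalan (m+1) := by
  exact_mod_cast congrArg (Nat.cast : ℕ → ℤ) (key1 m)

lemma conv (m : ℕ) :
    (catalan (m+1) : ℤ) = ∑ j ∈ range (m+1), (catalan j : ℤ) * catalan (m - j) := by
  rw [catalan_succ', Finset.Nat.sum_antidiagonal_eq_sum_range_succ_mk]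
  push_cast
  rfl

lemma wconv (m : ℕ) :
    2 * ∑ j ∈ range (m+1), (j : ℤ) * catalan j * catalan (m - j)
      = m * catalan (m+1) := by
  have hrefl := Finset.sum_range_reflect
    (fun j => (j : ℤ) * catalan j * catalan (m - j)) (m+1)
  simp only [Nat.add_sub_cancel] at hrefl
  have h2 : ∑ j ∈ range (m+1), (j : ℤ) * catalan j * catalan (m - j)
      = ∑ j ∈ range (m+1), ((m : ℤ) - j) * catalan (m - j) * catalan j := by
    rw [← hrefl]
    apply Finset.sum_congr rfl
    intro j hj
    have hj' : j ≤ m := by simpa [Nat.lt_succ_iff] using hj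
    have e1 : m - (m - j) = j := by omega
    have e2 : ((m - j : ℕ) : ℤ) = (m : ℤ) - j := by
      have := Nat.cast_sub (R := ℤ) hj'
      omega
    rw [e1, e2]
  calc 2 * ∑ j ∈ range (m+1), (j : ℤ) * catalan j * catalan (m - j)
      = (∑ j ∈ range (m+1), (j : ℤ) * catalan j * catalan (m - j))
        + ∑ j ∈ range (m+1), ((m : ℤ) - j) * catalan (m - j) * catalan j := by
        rw [← h2]; ring
    _ = ∑ j ∈ range (m+1), (m : ℤ) * ((catalan j : ℤ) * catalan (m - j)) := by
        rw [← Finset.sum_add_distrib]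
        exact Finset.sum_congr rfl fun j hj => by ring
    _ = m * catalan (m+1) := by rw [← Finset.mul_sum, ← conv]

def A (n : ℕ) : ℤ := ((2*n - 1).choose (n+1) : ℤ)

lemma A_zero : A 0 = 0 := by simp [A]

lemma A_succ (m : ℕ) : 2 * A (m+1) = m * catalan (m+1) := by
  have h : 2*(m+1) - 1 = 2*m+1 := by omega
  rw [A, h, show m+1+1 = m+2 from rfl]
  exact key1' m

lemma A_rec (n : ℕ) (hn : 1 ≤ n) :
    A n = 2 * ∑ j ∈ range n, A j * (catalan (n - 1 - j) : ℤ)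
            + (catalan n : ℤ) - (catalan (n - 1) : ℤ) := by
  obtain ⟨m, rfl⟩ : ∃ m, n = m + 1 := ⟨n - 1, by omega⟩
  have hS : ∑ j ∈ range (m+1), A j * (catalan (m + 1 - 1 - j) : ℤ)
      = ∑ k ∈ range m, A (k+1) * (catalan (m - 1 - k) : ℤ) := by
    rw [Finset.sum_range_succ']
    simp only [A_zero, zero_mul, add_zero]
    apply Finset.sum_congr rfl
    intro k hk
    have h : m + 1 - 1 - (k + 1) = m - 1 - k := by omega
    rw [h]
  have h2S : 2 * ∑ j ∈ range (m+1), A j * (catalan (m + 1 - 1 - j) : ℤ)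
      = ∑ k ∈ range m, (k : ℤ) * catalan (k+1) * (catalan (m - 1 - k) : ℤ) := by
    rw [hS, Finset.mul_sum]
    exact Finset.sum_congr rfl fun k hk => by rw [← mul_assoc, A_succ]
  rcases Nat.eq_zero_or_pos m with hm | hm
  · subst hm
    simp [A, Finset.sum_range_one, A_zero]
  obtain ⟨l, rfl⟩ : ∃ l, m = l + 1 := ⟨m - 1, by omega⟩
  have hw := wconv (l+1)
  have hc := conv (l+1)
  have hshift : (∑ j ∈ range (l+2), ((j : ℤ) - 1) * catalan j * (catalan (l + 1 - j) : ℤ))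
      = (∑ k ∈ range (l+1), (k : ℤ) * catalan (k+1) * (catalan (l + 1 - 1 - k) : ℤ))
        - catalan (l+1) := by
    rw [Finset.sum_range_succ']
    have heq : ∀ k ∈ range (l+1),
        (((k+1 : ℕ) : ℤ) - 1) * catalan (k+1) * (catalan (l + 1 - (k+1)) : ℤ)
          = (k : ℤ) * catalan (k+1) * (catalan (l + 1 - 1 - k) : ℤ) := by
      intro k hk
      have h : l + 1 - (k+1) = l + 1 - 1 - k := by omega
      rw [h]; push_cast; ring
    rw [Finset.sum_congr rfl heq]
    simp only [Nat.cast_zero, catalan_zero, Nat.sub_zero, Nat.cast_one]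
    push_cast
    ring
  have hsplit : ∑ j ∈ range (l+2), ((j : ℤ) - 1) * catalan j * (catalan (l + 1 - j) : ℤ)
      = (∑ j ∈ range (l+2), (j : ℤ) * catalan j * (catalan (l + 1 - j) : ℤ))
        - ∑ j ∈ range (l+2), (catalan j : ℤ) * (catalan (l + 1 - j) : ℤ) := by
    rw [← Finset.sum_sub_distrib]
    exact Finset.sum_congr rfl fun j hj => by ring
  have hA := A_succ (l+1)
  simp only [show l+1+1 = l+2 from rfl, show l+2-1 = l+1 from rfl, Nat.add_sub_cancel] at *
  push_cast at hw hA ⊢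
  linarith [h2S, hshift, hsplit, hw, hc]

theorem valley_recursion_closed_form (V : ℕ → ℤ) (h0 : V 0 = 0)
    (hrec : ∀ n : ℕ, 1 ≤ n →
      V n = 2 * ∑ j ∈ Finset.range n, V j * (catalan (n - 1 - j) : ℤ)
              + (catalan n : ℤ) - (catalan (n - 1) : ℤ)) :
    ∀ n : ℕ, 1 ≤ n → V n = ((2 * n - 1).choose (n + 1) : ℤ) := by
  have hall : ∀ n, V n = A n := by
    intro n
    induction n using Nat.strong_induction_on with
    | _ n ih =>
      rcases Nat.eq_zero_or_pos n with h | h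
      · subst h; rw [h0, A_zero]
      · have hsum : ∑ j ∈ Finset.range n, V j * (catalan (n - 1 - j) : ℤ)
            = ∑ j ∈ Finset.range n, A j * (catalan (n - 1 - j) : ℤ) :=
          Finset.sum_congr rfl fun j hj => by rw [ih j (Finset.mem_range.mp hj)]
        rw [hrec n h, A_rec n h, hsum]
  intro n hn
  rw [hall n]
  rfl
end

section
/- If a word s of length 2n over an alphabet of size k is a shuffle square, then there exist sets I = {i_1 < ... < i_n} and J = {j_1 < ... < j_n} partitioning {1,...,2n} such that s_{i_r} = s_{j_r} and i_r < j_r for all 1 ≤ r ≤ n (i.e., (I,J) forms a standard 2×n Young tableau witnessing the shuffle square structure). -/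
/-- A word `s` of length `2n` over alphabet `Fin k` is a shuffle square if it can be
partitioned into two disjoint identical subsequences of length `n`. -/
def IsShuffleSquare {n k : ℕ} (s : Fin (2 * n) → Fin k) : Prop :=
  ∃ I J : Fin n → Fin (2 * n), StrictMono I ∧ StrictMono J ∧
    (∀ r r' : Fin n, I r ≠ J r') ∧
    (∀ x : Fin (2 * n), (∃ r, I r = x) ∨ (∃ r, J r = x)) ∧
    (∀ r : Fin n, s (I r) = s (J r))

theorem shuffleSquare_index_tableau (n k : ℕ) (s : Fin (2 * n) → Fin k)
    (h : IsShuffleSquare s) :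
    ∃ I J : Fin n → Fin (2 * n), StrictMono I ∧ StrictMono J ∧
      (∀ r r' : Fin n, I r ≠ J r') ∧
      (∀ x : Fin (2 * n), (∃ r, I r = x) ∨ (∃ r, J r = x)) ∧
      (∀ r : Fin n, s (I r) = s (J r)) ∧
      (∀ r : Fin n, I r < J r) := by
  obtain ⟨I, J, hI, hJ, hd, hc, hs⟩ := h
  have hlt : ∀ r : Fin n, min (I r) (J r) < max (I r) (J r) :=
    fun r => min_lt_max.mpr (hd r r)
  refine ⟨fun r => min (I r) (J r), fun r => max (I r) (J r), ?_, ?_, ?_, ?_, ?_, hlt⟩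
  · intro a b hab
    exact lt_min ((min_le_left _ _).trans_lt (hI hab))
      ((min_le_right _ _).trans_lt (hJ hab))
  · intro a b hab
    exact max_lt ((hI hab).trans_le (le_max_left _ _))
      ((hJ hab).trans_le (le_max_right _ _))
  · intro r r' heq
    dsimp only at heq
    rcases min_cases (I r) (J r) with ⟨h1, _⟩ | ⟨h1, _⟩ <;>
      rcases max_cases (I r') (J r') with ⟨h2, _⟩ | ⟨h2, _⟩ <;>
      rw [h1, h2] at heq
    · obtain rfl := hI.injective heq
      exact absurd (h1.trans h2.symm) (hlt r).ne
    · exact hd r r' heq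
    · exact hd r' r heq.symm
    · obtain rfl := hJ.injective heq
      exact absurd (h1.trans h2.symm) (hlt r).ne
  · intro x
    dsimp only
    rcases hc x with ⟨r, hr⟩ | ⟨r, hr⟩
    · rcases le_or_gt (I r) (J r) with hle | hle
      · exact Or.inl ⟨r, by rw [min_eq_left hle, hr]⟩
      · exact Or.inr ⟨r, by rw [max_eq_left hle.le, hr]⟩
    · rcases le_or_gt (J r) (I r) with hle | hle
      · exact Or.inl ⟨r, by rw [min_eq_right hle, hr]⟩
      · exact Or.inr ⟨r, by rw [max_eq_right hle.le, hr]⟩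
  · intro r
    dsimp only
    rcases min_cases (I r) (J r) with ⟨h1, h1'⟩ | ⟨h1, h1'⟩ <;>
      rcases max_cases (I r) (J r) with ⟨h2, _⟩ | ⟨h2, _⟩ <;>
      rw [h1, h2]
    · exact hs r
    · exact (hs r).symm
end

section
/- For any alphabet size k ≥ 1 and n ≥ 1, the number of shuffle squares of length 2n over an alphabet of size k is at most C_n · k^n, where C_n is the n-th Catalan number. -/
open Finset DyckStep

theorem List.count_take_ofFn {α : Type*} [DecidableEq α] {m : ℕ} (f : Fin m → α) (a : α)
    (i : ℕ) : ((List.ofFn f).take i).count a = #{x : Fin m | x.val < i ∧ f x = a} := by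
  induction i with
  | zero => simp
  | succ i ih =>
    rw [List.take_add_one, List.count_append, ih]
    rcases lt_or_ge i m with h | h
    · rw [List.getElem?_ofFn, dif_pos h, Option.toList_some, List.count_singleton]
      split_ifs with hf
      · rw [← card_insert_of_notMem (a := ⟨i, h⟩) (by simp)]
        congr 1; ext x; simp [Fin.ext_iff]; grind
      · rw [add_zero]
        congr 1; ext x; simp; grind
    · rw [List.getElem?_eq_none (by simpa using h), Option.toList_none, List.count_nil, add_zero]
      congr 1; ext x; simp; omega

theorem Finset.image_eq_compl_image_of_cover {α β γ : Type*} [Fintype α] [DecidableEq α]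
    [Fintype β] [Fintype γ] {f : β → α} {g : γ → α} (hf : f.Injective) (hg : g.Injective)
    (hcard : Fintype.card α = Fintype.card β + Fintype.card γ)
    (hcover : ∀ x, x ∈ Set.range f ∨ x ∈ Set.range g) :
    univ.image g = (univ.image f)ᶜ := by
  refine (eq_of_subset_of_card_le (fun x hx => ?_) ?_).symm
  · obtain ⟨y, rfl⟩ := (hcover x).resolve_left (by simpa using hx)
    exact mem_image_of_mem g (mem_univ y)
  · rw [card_compl, card_image_of_injective _ hf, card_image_of_injective _ hg, card_univ,
      card_univ]
    omega

theorem StrictMono.eq_of_image_univ_eq {β γ : Type*} [Fintype β] [LinearOrder β] [Preorder γ]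
    [DecidableEq γ] {f g : β → γ} (hf : StrictMono f) (hg : StrictMono g)
    (h : univ.image f = univ.image g) : f = g :=
  (hf.range_inj hg).1 (by simpa using congrArg ((↑) : Finset γ → Set γ) h)

namespace DyckWord

variable {m : ℕ}

theorem count_U_take_ofFn_ite (A : Finset (Fin m)) (i : ℕ) :
    ((List.ofFn fun x => if x ∈ A then U else D).take i).count U = #{x ∈ A | x.val < i} := by
  rw [List.count_take_ofFn]
  congr 1; ext x; simp [and_comm]

theorem count_D_take_ofFn_ite (A : Finset (Fin m)) (i : ℕ) :
    ((List.ofFn fun x => if x ∈ A then U else D).take i).count D = #{x ∈ Aᶜ | x.val < i} := by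
  rw [List.count_take_ofFn]
  congr 1; ext x; simp [and_comm]

def ofFinset (A : Finset (Fin m)) (hcard : #Aᶜ = #A)
    (hballot : ∀ i : ℕ, #{x ∈ Aᶜ | x.val < i} ≤ #{x ∈ A | x.val < i}) : DyckWord where
  toList := List.ofFn fun x => if x ∈ A then U else D
  count_U_eq_count_D := by
    rw [← List.take_length (l := List.ofFn _), count_U_take_ofFn_ite, count_D_take_ofFn_ite]
    simpa [filter_true_of_mem] using hcard.symm
  count_D_le_count_U i := by
    rw [count_U_take_ofFn_ite, count_D_take_ofFn_ite]
    exact hballot i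

theorem semilength_ofFinset (A : Finset (Fin m)) (hcard : #Aᶜ = #A)
    (hballot : ∀ i : ℕ, #{x ∈ Aᶜ | x.val < i} ≤ #{x ∈ A | x.val < i}) :
    (ofFinset A hcard hballot).semilength = #A := by
  change (List.ofFn fun x => if x ∈ A then U else D).count U = #A
  rw [← List.take_length (l := List.ofFn _), count_U_take_ofFn_ite]
  simp [filter_true_of_mem]

theorem ofFinset_inj {A B : Finset (Fin m)} {hA : #Aᶜ = #A}
    {hA' : ∀ i : ℕ, #{x ∈ Aᶜ | x.val < i} ≤ #{x ∈ A | x.val < i}} {hB : #Bᶜ = #B}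
    {hB' : ∀ i : ℕ, #{x ∈ Bᶜ | x.val < i} ≤ #{x ∈ B | x.val < i}} :
    ofFinset A hA hA' = ofFinset B hB hB' ↔ A = B := by
  refine ⟨fun h => ?_, fun h => by subst h; rfl⟩
  have hsteps := List.ofFn_injective (congrArg DyckWord.toList h)
  ext x
  have hx := congrFun hsteps x
  by_cases hA : x ∈ A <;> by_cases hB : x ∈ B <;> simp_all

end DyckWord

structure ShuffleSplitting {n k : ℕ} (s : Fin (2 * n) → Fin k) where
  fst : Fin n → Fin (2 * n)
  snd : Fin n → Fin (2 * n)
  strictMono_fst : StrictMono fst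
  strictMono_snd : StrictMono snd
  fst_lt_snd (r : Fin n) : fst r < snd r
  image_snd : univ.image snd = (univ.image fst)ᶜ
  apply_fst (r : Fin n) : s (fst r) = s (snd r)

theorem IsShuffleSquare.nonempty_shuffleSplitting {n k : ℕ} {s : Fin (2 * n) → Fin k}
    (h : IsShuffleSquare s) : Nonempty (ShuffleSplitting s) := by
  obtain ⟨I, J, hI, hJ, hIJ, hcover, hs⟩ := h
  have hmin : StrictMono fun r => min (I r) (J r) := fun a b hab => min_lt_min (hI hab) (hJ hab)
  have hmax : StrictMono fun r => max (I r) (J r) := fun a b hab => max_lt_max (hI hab) (hJ hab)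
  have hcover' : ∀ x, x ∈ Set.range (fun r => min (I r) (J r)) ∨
      x ∈ Set.range (fun r => max (I r) (J r)) := by
    intro x
    rcases hcover x with ⟨r, rfl⟩ | ⟨r, rfl⟩ <;> rcases le_total (I r) (J r) with hr | hr
    exacts [.inl ⟨r, min_eq_left hr⟩, .inr ⟨r, max_eq_left hr⟩,
      .inr ⟨r, max_eq_right hr⟩, .inl ⟨r, min_eq_right hr⟩]
  refine ⟨
    { fst := fun r => min (I r) (J r)
      snd := fun r => max (I r) (J r)
      strictMono_fst := hmin
      strictMono_snd := hmax
      fst_lt_snd := fun r => min_lt_max.2 (hIJ r r)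
      image_snd := image_eq_compl_image_of_cover hmin.injective hmax.injective
        (by simp [two_mul]) hcover'
      apply_fst := fun r => ?_ }⟩
  rcases le_total (I r) (J r) with hr | hr <;> simp [hr, hs r]

namespace ShuffleSplitting

variable {n k : ℕ} {s t : Fin (2 * n) → Fin k} (σ : ShuffleSplitting s)

theorem card_image_fst : #(univ.image σ.fst) = n := by
  simp [card_image_of_injective _ σ.strictMono_fst.injective]

theorem card_compl_image_fst : #(univ.image σ.fst)ᶜ = #(univ.image σ.fst) := by
  rw [← σ.image_snd, card_image_of_injective _ σ.strictMono_snd.injective,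
    card_image_fst]
  simp

theorem card_filter_compl_image_fst_le (i : ℕ) :
    #{x ∈ (univ.image σ.fst)ᶜ | x.val < i} ≤ #{x ∈ univ.image σ.fst | x.val < i} := by
  rw [← σ.image_snd, filter_image, filter_image,
    card_image_of_injective _ σ.strictMono_snd.injective,
    card_image_of_injective _ σ.strictMono_fst.injective]
  exact card_le_card <| monotone_filter_right _ fun r _ hr =>
    (Fin.lt_def.1 (σ.fst_lt_snd r)).trans hr

def dyckWord : DyckWord :=
  .ofFinset (univ.image σ.fst) σ.card_compl_image_fst σ.card_filter_compl_image_fst_le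

theorem semilength_dyckWord : σ.dyckWord.semilength = n :=
  (DyckWord.semilength_ofFinset ..).trans σ.card_image_fst

theorem eq_of_dyckWord_eq (τ : ShuffleSplitting t) (hword : σ.dyckWord = τ.dyckWord)
    (hletters : s ∘ σ.fst = t ∘ τ.fst) : s = t := by
  have himage : univ.image σ.fst = univ.image τ.fst := DyckWord.ofFinset_inj.1 hword
  have hfst : σ.fst = τ.fst :=
    σ.strictMono_fst.eq_of_image_univ_eq τ.strictMono_fst himage
  have hsnd : σ.snd = τ.snd := by
    refine σ.strictMono_snd.eq_of_image_univ_eq τ.strictMono_snd ?_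
    rw [σ.image_snd, τ.image_snd, himage]
  funext x
  by_cases hx : x ∈ univ.image σ.fst
  · obtain ⟨r, -, rfl⟩ := mem_image.1 hx
    simpa [hfst] using congrFun hletters r
  · rw [← mem_compl, ← σ.image_snd] at hx
    obtain ⟨r, -, rfl⟩ := mem_image.1 hx
    rw [← σ.apply_fst, hsnd, ← τ.apply_fst]
    exact congrFun hletters r

end ShuffleSplitting

open scoped Classical in
theorem card_shuffleSquares_le_general (n k : ℕ) :
    (Finset.univ.filter (fun s : Fin (2 * n) → Fin k => IsShuffleSquare s)).card
      ≤ catalan n * k ^ n := by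
  let σ (s : {s : Fin (2 * n) → Fin k // IsShuffleSquare s}) : ShuffleSplitting s.1 :=
    s.2.nonempty_shuffleSplitting.some
  let code (s : {s : Fin (2 * n) → Fin k // IsShuffleSquare s}) :
      {p : DyckWord // p.semilength = n} × (Fin n → Fin k) :=
    (⟨(σ s).dyckWord, (σ s).semilength_dyckWord⟩, s.1 ∘ (σ s).fst)
  have hcode : code.Injective := fun s t h =>
    Subtype.ext <| (σ s).eq_of_dyckWord_eq (σ t) (congrArg (·.1.1) h) (congrArg Prod.snd h)
  calc _ = Fintype.card {s : Fin (2 * n) → Fin k // IsShuffleSquare s} :=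
        (Fintype.card_subtype _).symm
    _ ≤ _ := Fintype.card_le_of_injective code hcode
    _ = catalan n * k ^ n := by simp [DyckWord.card_dyckWord_semilength_eq_catalan]

open scoped Classical in
theorem card_shuffleSquares_le (n k : ℕ) (hn : 1 ≤ n) (hk : 1 ≤ k) :
    (Finset.univ.filter (fun s : Fin (2 * n) → Fin k => IsShuffleSquare s)).card
      ≤ catalan n * k ^ n :=
  card_shuffleSquares_le_general n k
end

section
/- For any alphabet size k ≥ 1 and n ≥ 1, the number of reverse shuffle squares of length 2n over an alphabet of size k is at most C_n · k^n, where C_n is the n-th Catalan number. -/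
/-- A word `s` of length `2n` over alphabet `Fin k` is a reverse shuffle square if it
can be partitioned into two disjoint subsequences of length `n` that are reverses of
each other. -/
def IsRevShuffleSquare {n k : ℕ} (s : Fin (2 * n) → Fin k) : Prop :=
  ∃ I J : Fin n → Fin (2 * n), StrictMono I ∧ StrictMono J ∧
    (∀ r r' : Fin n, I r ≠ J r') ∧
    (∀ x : Fin (2 * n), (∃ r, I r = x) ∨ (∃ r, J r = x)) ∧
    (∀ r : Fin n, s (I r) = s (J r.rev))

/-! In a reverse shuffle square the letters at `I r` and `J r.rev` are equal. Since `I` increases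
and `r ↦ J r.rev` decreases, the earlier position of any such pair precedes the later position of
any other, so the earlier positions fill the first half of the word. The word is thus determined
by its first half and a permutation `σ` sending `p` to the partner of `p` (shifted by `n`). Two
pairs with the same orientation are nested, so `σ` contains no increasing triple. A permutation
avoiding `123` is determined by its prefix minima, a weakly decreasing sequence `m` with
`m i + i < n`, i.e. a Dyck path; there are at most `catalan n` of these by the first-return
decomposition. -/

open Finset

def Avoids123 {α β : Type*} [Preorder α] [Preorder β] (σ : α → β) : Prop :=
  ∀ ⦃i j l : α⦄, i < j → j < l → ¬(σ i < σ j ∧ σ j < σ l)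

section prefixMin

variable {α β : Type*} [LinearOrder α] [LocallyFiniteOrderBot α] [LinearOrder β]

def prefixMin (σ : α → β) (i : α) : β :=
  (Iic i).inf' nonempty_Iic σ

variable {σ τ : α → β} {i j : α}

theorem prefixMin_le (h : j ≤ i) : prefixMin σ i ≤ σ j :=
  inf'_le σ (mem_Iic.2 h)

theorem exists_le_apply_eq_prefixMin (σ : α → β) (i : α) : ∃ j ≤ i, σ j = prefixMin σ i := by
  obtain ⟨j, hj, h⟩ := exists_mem_eq_inf' nonempty_Iic σ (s := Iic i)
  exact ⟨j, mem_Iic.1 hj, h.symm⟩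

theorem antitone_prefixMin (σ : α → β) : Antitone (prefixMin σ) := fun i i' hii' => by
  obtain ⟨j, hj, h⟩ := exists_le_apply_eq_prefixMin σ i
  exact h ▸ prefixMin_le (hj.trans hii')

/-- If `σ i < τ i`, either `σ i` is a new prefix minimum, which `τ` must then attain earlier, or
`σ` has a smaller value before `i` and takes the value `τ i` after `i`: an occurrence of `123`. -/
theorem le_of_prefixMin_eq (hσ : σ.Bijective) (hτ : τ.Injective) (hσa : Avoids123 σ)
    (hpre : ∀ j < i, σ j = τ j) (hmin : prefixMin σ i = prefixMin τ i) : τ i ≤ σ i := by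
  by_contra! hlt
  rcases (prefixMin_le (σ := σ) (le_refl i)).eq_or_lt with hnew | hold
  · obtain ⟨j, hji, hj⟩ := exists_le_apply_eq_prefixMin τ i
    have hji : j < i := hji.lt_of_ne (by rintro rfl; rw [hj, ← hmin, hnew] at hlt; exact hlt.false)
    exact hji.ne (hσ.1 (by rw [hpre j hji, hj, ← hmin, hnew]))
  · obtain ⟨h, hhi, hh⟩ := exists_le_apply_eq_prefixMin σ i
    have hhi : h < i := hhi.lt_of_ne (by rintro rfl; exact hold.ne hh.symm)
    obtain ⟨j, hj⟩ := hσ.2 (τ i)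
    have hij : i < j := by
      rcases lt_trichotomy j i with hji | rfl | hij
      · exact absurd (hτ ((hpre j hji).symm.trans hj)) hji.ne
      · exact absurd hj hlt.ne
      · exact hij
    exact hσa hhi hij ⟨hh ▸ hold, hj ▸ hlt⟩

theorem eq_of_prefixMin_eq [WellFoundedLT α] (hσ : σ.Bijective) (hτ : τ.Bijective)
    (hσa : Avoids123 σ) (hτa : Avoids123 τ) (h : prefixMin σ = prefixMin τ) : σ = τ := by
  funext i
  induction i using WellFoundedLT.induction with
  | _ i ih =>
    exact le_antisymm (le_of_prefixMin_eq hτ hσ.1 hτa (fun j hj => (ih j hj).symm)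
      (congrFun h i).symm) (le_of_prefixMin_eq hσ hτ.1 hσa ih (congrFun h i))

end prefixMin

theorem prefixMin_add_lt {n : ℕ} {σ : Fin n → Fin n} (hσ : σ.Injective) (i : Fin n) :
    ((prefixMin σ i : Fin n) : ℕ) + i < n := by
  have hsub : (Iic i).image σ ⊆ Ici (prefixMin σ i) := fun x hx => by
    obtain ⟨j, hj, rfl⟩ := mem_image.1 hx
    exact mem_Ici.2 (prefixMin_le (mem_Iic.1 hj))
  have := card_le_card hsub
  rw [card_image_of_injective _ hσ, Fin.card_Iic, Fin.card_Ici] at this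
  omega

def boundedAntitone (n : ℕ) : Finset (Fin n → ℕ) :=
  {m ∈ Fintype.piFinset fun _ => range n | Antitone m ∧ ∀ i, m i + i < n}

theorem mem_boundedAntitone {n : ℕ} {m : Fin n → ℕ} :
    m ∈ boundedAntitone n ↔ Antitone m ∧ ∀ i, m i + i < n := by
  simp only [boundedAntitone, mem_filter, Fintype.mem_piFinset, mem_range,
    and_iff_right_iff_imp]
  exact fun h i => by have := h.2 i; omega

namespace boundedAntitone

variable {n : ℕ} (m : Fin (n + 1) → ℕ)

/-- For `m ∈ boundedAntitone (n + 1)`, the first index `k` with `m k + k = n`: the first return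
to the diagonal of the Dyck path encoded by `m`. -/
def splitIndex : ℕ :=
  Nat.find (⟨n, fun _ => Nat.le_add_left n _⟩ : ∃ i, ∀ h : i < n + 1, n ≤ m ⟨i, h⟩ + i)

theorem splitIndex_le : splitIndex m ≤ n :=
  Nat.find_min' _ fun _ => Nat.le_add_left n _

theorem splitIndex_lt : splitIndex m < n + 1 :=
  Nat.lt_succ_of_le (splitIndex_le m)

variable {m}

theorem apply_splitIndex (hm : m ∈ boundedAntitone (n + 1)) :
    m ⟨splitIndex m, splitIndex_lt m⟩ + splitIndex m = n := by
  have hle : n ≤ m ⟨splitIndex m, splitIndex_lt m⟩ + splitIndex m := Nat.find_spec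
    (⟨n, fun _ => Nat.le_add_left n _⟩ : ∃ i, ∀ h : i < n + 1, n ≤ m ⟨i, h⟩ + i) _
  have := (mem_boundedAntitone.1 hm).2 ⟨splitIndex m, splitIndex_lt m⟩
  simp only at this
  omega

theorem apply_add_lt_of_lt_splitIndex {i : ℕ} (hi : i < splitIndex m) :
    m ⟨i, by have := splitIndex_le m; omega⟩ + i < n := by
  have := Nat.find_min _ hi
  push Not at this
  exact this.2

theorem le_apply_of_le_splitIndex (hm : m ∈ boundedAntitone (n + 1)) {i : ℕ}
    (hi : i ≤ splitIndex m) : n - splitIndex m ≤ m ⟨i, by have := splitIndex_le m; omega⟩ := by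
  have := (mem_boundedAntitone.1 hm).1
    (Fin.mk_le_mk.2 hi : (⟨i, by have := splitIndex_lt m; omega⟩ : Fin (n + 1)) ≤
      ⟨splitIndex m, splitIndex_lt m⟩)
  have := apply_splitIndex hm
  omega

variable (m)

def splitLeft (i : Fin (splitIndex m)) : ℕ :=
  m ⟨i, by have := splitIndex_le m; omega⟩ - (n - splitIndex m)

def splitRight (j : Fin (n - splitIndex m)) : ℕ :=
  m ⟨splitIndex m + 1 + j, by have := j.isLt; omega⟩

def split : Σ k : ℕ, (Fin k → ℕ) × (Fin (n - k) → ℕ) :=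
  ⟨splitIndex m, splitLeft m, splitRight m⟩

def glue (x : Σ k : ℕ, (Fin k → ℕ) × (Fin (n - k) → ℕ)) (i : Fin (n + 1)) : ℕ :=
  if h : (i : ℕ) < x.1 then x.2.1 ⟨i, h⟩ + (n - x.1)
  else if h' : (i : ℕ) = x.1 then n - x.1
  else x.2.2 ⟨i - x.1 - 1, by omega⟩

variable {m}

theorem glue_split (hm : m ∈ boundedAntitone (n + 1)) : glue (split m) = m := by
  funext ⟨i, hi⟩
  unfold glue split splitLeft splitRight
  dsimp only
  split_ifs with hlt heq
  · have := le_apply_of_le_splitIndex hm hlt.le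
    omega
  · subst heq
    have := apply_splitIndex hm
    omega
  · congr 1
    ext
    simp only
    omega

theorem splitLeft_mem (hm : m ∈ boundedAntitone (n + 1)) :
    splitLeft m ∈ boundedAntitone (splitIndex m) := by
  refine mem_boundedAntitone.2 ⟨fun i j hij => ?_, fun i => ?_⟩
  · exact Nat.sub_le_sub_right ((mem_boundedAntitone.1 hm).1 (Fin.mk_le_mk.2 hij)) _
  · have := apply_add_lt_of_lt_splitIndex i.isLt
    have := le_apply_of_le_splitIndex hm i.isLt.le
    simp only [splitLeft]
    omega

theorem splitRight_mem (hm : m ∈ boundedAntitone (n + 1)) :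
    splitRight m ∈ boundedAntitone (n - splitIndex m) := by
  refine mem_boundedAntitone.2 ⟨fun i j hij => ?_, fun j => ?_⟩
  · exact (mem_boundedAntitone.1 hm).1 (Fin.mk_le_mk.2 (by omega))
  · have := (mem_boundedAntitone.1 hm).2 ⟨splitIndex m + 1 + j, by omega⟩
    simp only [splitRight] at this ⊢
    omega

end boundedAntitone

open boundedAntitone in
theorem card_boundedAntitone_le_catalan (n : ℕ) : #(boundedAntitone n) ≤ catalan n := by
  induction n using Nat.strong_induction_on with
  | _ n ih =>
  cases n with
  | zero => simpa using card_le_one_of_subsingleton (boundedAntitone 0)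
  | succ n =>
    have hmaps : Set.MapsTo split (boundedAntitone (n + 1) : Set (Fin (n + 1) → ℕ))
        ((range (n + 1)).sigma fun k => boundedAntitone k ×ˢ boundedAntitone (n - k)) :=
      fun m hm => mem_sigma.2 ⟨mem_range.2 (Nat.lt_succ_of_le (splitIndex_le m)),
        mem_product.2 ⟨splitLeft_mem hm, splitRight_mem hm⟩⟩
    have hinj : Set.InjOn split (boundedAntitone (n + 1) : Set (Fin (n + 1) → ℕ)) :=
      Set.LeftInvOn.injOn (f₁' := glue) fun m hm => glue_split hm
    calc #(boundedAntitone (n + 1))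
        ≤ #((range (n + 1)).sigma fun k => boundedAntitone k ×ˢ boundedAntitone (n - k)) :=
          card_le_card_of_injOn split hmaps hinj
      _ = ∑ k ∈ range (n + 1), #(boundedAntitone k) * #(boundedAntitone (n - k)) := by
          simp only [card_sigma, card_product]
      _ ≤ ∑ k ∈ range (n + 1), catalan k * catalan (n - k) :=
          sum_le_sum fun k hk => Nat.mul_le_mul (ih k (by have := mem_range.1 hk; omega))
            (ih (n - k) (by omega))
      _ = catalan (n + 1) := by
          rw [catalan_succ, Fin.sum_univ_eq_sum_range fun k => catalan k * catalan (n - k)]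

open scoped Classical in
theorem card_avoids123_le_catalan (n : ℕ) :
    #{σ : Equiv.Perm (Fin n) | Avoids123 σ} ≤ catalan n := by
  refine (card_le_card_of_injOn (fun (σ : Equiv.Perm (Fin n)) i => ((prefixMin σ i : Fin n) : ℕ))
    (fun σ hσ => ?_) (fun σ hσ τ hτ h => ?_)).trans (card_boundedAntitone_le_catalan n)
  · exact mem_boundedAntitone.2 ⟨fun i j hij => antitone_prefixMin σ hij,
      prefixMin_add_lt σ.injective⟩
  · simp only [mem_coe, mem_filter, mem_univ, true_and] at hσ hτ
    exact Equiv.coe_inj.1 (eq_of_prefixMin_eq σ.bijective τ.bijective hσ hτ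
      (funext fun i => Fin.ext (congrFun h i)))

theorem Function.Injective.of_forall_eq_or_eq {ι γ : Type*} {a b f : ι → γ} (ha : a.Injective)
    (hb : b.Injective) (hab : ∀ r t, a r ≠ b t) (hf : ∀ r, f r = a r ∨ f r = b r) :
    f.Injective := fun r t h => by
  rcases hf r with hr | hr <;> rcases hf t with ht | ht <;> rw [hr, ht] at h
  · exact ha h
  · exact absurd h (hab r t)
  · exact absurd h.symm (hab t r)
  · exact hb h

section pairs

variable {ι γ : Type*} [LinearOrder ι] [LinearOrder γ] {a b : ι → γ}

theorem min_lt_max_of_strictMono_strictAnti (ha : StrictMono a) (hb : StrictAnti b)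
    (hab : ∀ r, a r ≠ b r) (r t : ι) : min (a r) (b r) < max (a t) (b t) := by
  rcases lt_trichotomy r t with hrt | rfl | htr
  · exact (min_le_left _ _).trans_lt ((ha hrt).trans_le (le_max_left _ _))
  · exact min_lt_max.2 (hab r)
  · exact (min_le_right _ _).trans_lt ((hb htr).trans_le (le_max_right _ _))

theorem max_lt_max_of_min_lt_min (ha : StrictMono a) (hb : StrictAnti b) {r t : ι}
    (horient : a r ≤ b r ↔ a t ≤ b t) (h : min (a r) (b r) < min (a t) (b t)) :
    max (a t) (b t) < max (a r) (b r) := by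
  by_cases hr : a r ≤ b r
  · have ht := horient.1 hr
    rw [min_eq_left hr, min_eq_left ht] at h
    rw [max_eq_right hr, max_eq_right ht]
    exact hb (ha.lt_iff_lt.1 h)
  · have ht := lt_of_not_ge (mt horient.2 hr)
    rw [min_eq_right (lt_of_not_ge hr).le, min_eq_right ht.le] at h
    rw [max_eq_left (lt_of_not_ge hr).le, max_eq_left ht.le]
    exact ha (hb.lt_iff_gt.1 h)

end pairs

section counting

variable {N : ℕ} {ι : Type*} [Fintype ι]

theorem val_add_card_lt_of_forall_lt {x : Fin N} {d : ι → Fin N} (hd : d.Injective)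
    (h : ∀ t, x < d t) : (x : ℕ) + Fintype.card ι < N := by
  have := card_le_card_of_injOn (s := univ) (t := Ioi x) d (fun t _ => mem_Ioi.2 (h t))
    hd.injOn
  rw [card_univ, Fin.card_Ioi] at this
  omega

theorem card_le_val_of_forall_lt {y : Fin N} {c : ι → Fin N} (hc : c.Injective)
    (h : ∀ r, c r < y) : Fintype.card ι ≤ y := by
  simpa using card_le_card_of_injOn (s := univ) (t := Iio y) c (fun r _ => mem_Iio.2 (h r))
    hc.injOn

end counting

theorem exists_perm_of_forall_lt {n : ℕ} {c d : Fin n → Fin (2 * n)} (hc : c.Injective)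
    (hd : d.Injective) (hcd : ∀ r t, c r < d t) :
    ∃ e σ : Equiv.Perm (Fin n), ∀ p, (c (e p) : ℕ) = p ∧ (d (e p) : ℕ) = n + σ p := by
  have hc_lt r : (c r : ℕ) < n := by
    have := val_add_card_lt_of_forall_lt hd (hcd r)
    rw [Fintype.card_fin] at this
    omega
  have hd_ge t : n ≤ d t := by simpa using card_le_val_of_forall_lt hc (hcd · t)
  let c' : Fin n → Fin n := fun r => ⟨c r, hc_lt r⟩
  let d' : Fin n → Fin n := fun r => ⟨d r - n, by omega⟩
  have hc' : c'.Bijective := Finite.injective_iff_bijective.1 fun r t h =>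
    hc (Fin.ext (Fin.mk.inj h))
  have hd' : d'.Bijective := Finite.injective_iff_bijective.1 fun r t h =>
    hd (Fin.ext (by have := hd_ge r; have := hd_ge t; have := Fin.mk.inj h; omega))
  refine ⟨(Equiv.ofBijective c' hc').symm, (Equiv.ofBijective c' hc').symm.trans
    (Equiv.ofBijective d' hd'), fun p => ⟨?_, ?_⟩⟩
  · exact congrArg Fin.val ((Equiv.ofBijective c' hc').apply_symm_apply p)
  · have := hd_ge ((Equiv.ofBijective c' hc').symm p)
    simp only [d', Equiv.trans_apply, Equiv.ofBijective_apply]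
    omega

def leftHalf {n : ℕ} (p : Fin n) : Fin (2 * n) := ⟨p, by omega⟩

def rightHalf {n : ℕ} (q : Fin n) : Fin (2 * n) := ⟨n + q, by omega⟩

theorem IsRevShuffleSquare.exists_avoids123 {n k : ℕ} {s : Fin (2 * n) → Fin k}
    (hs : IsRevShuffleSquare s) :
    ∃ σ : Equiv.Perm (Fin n), Avoids123 σ ∧ ∀ p, s (leftHalf p) = s (rightHalf (σ p)) := by
  obtain ⟨I, J, hI, hJ, hIJ, -, hsIJ⟩ := hs
  let b : Fin n → Fin (2 * n) := fun r => J r.rev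
  have hb : StrictAnti b := fun r t h => hJ (Fin.rev_lt_rev.2 h)
  have hIb r t : I r ≠ b t := hIJ r t.rev
  let c r := min (I r) (b r)
  let d r := max (I r) (b r)
  have hc : c.Injective := hI.injective.of_forall_eq_or_eq hb.injective hIb
    fun r => min_choice _ _
  have hd : d.Injective := hI.injective.of_forall_eq_or_eq hb.injective hIb
    fun r => max_choice _ _
  have hcd := min_lt_max_of_strictMono_strictAnti hI hb fun r => hIb r r
  have hsym r : s (c r) = s (d r) := by
    rcases le_total (I r) (b r) with h | h
    · simp only [c, d, min_eq_left h, max_eq_right h, b, hsIJ]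
    · simp only [c, d, min_eq_right h, max_eq_left h, b, hsIJ]
  obtain ⟨e, σ, he⟩ := exists_perm_of_forall_lt hc hd hcd
  have hcross r t (hc : c r < c t) (hd : d r < d t) : ¬(I r ≤ b r ↔ I t ≤ b t) :=
    fun horient => (max_lt_max_of_min_lt_min hI hb horient hc).not_gt hd
  refine ⟨σ, fun i j l hij hjl hσ => ?_, fun p => ?_⟩
  · have hc' {p q : Fin n} (h : p < q) : c (e p) < c (e q) := by
      rw [Fin.lt_def, (he p).1, (he q).1]; exact h
    have hd' {p q : Fin n} (h : σ p < σ q) : d (e p) < d (e q) := by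
      rw [Fin.lt_def, (he p).2, (he q).2]; exact Nat.add_lt_add_left h n
    have := hcross _ _ (hc' hij) (hd' hσ.1)
    have := hcross _ _ (hc' hjl) (hd' hσ.2)
    have := hcross _ _ (hc' (hij.trans hjl)) (hd' (hσ.1.trans hσ.2))
    tauto
  · convert hsym (e p) using 2 <;> ext
    · exact ((he p).1).symm
    · exact ((he p).2).symm

def pairedWord {α : Type*} {n : ℕ} (σ : Equiv.Perm (Fin n)) (w : Fin n → α) (x : Fin (2 * n)) :
    α :=
  if h : (x : ℕ) < n then w ⟨x, h⟩ else w (σ.symm ⟨x - n, by omega⟩)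

theorem pairedWord_eq {α : Type*} {n : ℕ} {σ : Equiv.Perm (Fin n)} {s : Fin (2 * n) → α}
    (hs : ∀ p, s (leftHalf p) = s (rightHalf (σ p))) : pairedWord σ (s ∘ leftHalf) = s := by
  funext x
  by_cases h : (x : ℕ) < n
  · simp only [pairedWord, dif_pos h, Function.comp_apply]
    rfl
  · simp only [pairedWord, dif_neg h, Function.comp_apply, hs, Equiv.apply_symm_apply]
    congr 1
    ext
    simp only [rightHalf]
    omega

open scoped Classical in
theorem card_revShuffleSquares_le_general (n k : ℕ) :
    (Finset.univ.filter (fun s : Fin (2 * n) → Fin k => IsRevShuffleSquare s)).card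
      ≤ catalan n * k ^ n := by
  let avoiders : Finset (Equiv.Perm (Fin n)) := {σ | Avoids123 σ}
  have hsub : univ.filter (fun s : Fin (2 * n) → Fin k => IsRevShuffleSquare s) ⊆
      (avoiders ×ˢ univ).image fun x => pairedWord x.1 x.2 := fun s hs => by
    obtain ⟨σ, hσ, hs⟩ := (mem_filter.1 hs).2.exists_avoids123
    exact mem_image.2 ⟨(σ, s ∘ leftHalf), by simp [avoiders, hσ], pairedWord_eq hs⟩
  calc _ ≤ #(avoiders ×ˢ (univ : Finset (Fin n → Fin k))) :=
        (card_le_card hsub).trans card_image_le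
    _ = #avoiders * k ^ n := by simp [card_product]
    _ ≤ catalan n * k ^ n := Nat.mul_le_mul_right _ (card_avoids123_le_catalan n)

open scoped Classical in
theorem card_revShuffleSquares_le (n k : ℕ) (hn : 1 ≤ n) (hk : 1 ≤ k) :
    (Finset.univ.filter (fun s : Fin (2 * n) → Fin k => IsRevShuffleSquare s)).card
      ≤ catalan n * k ^ n :=
  card_revShuffleSquares_le_general n k
end

section
/- Every binary reverse shuffle square of length 2n is an abelian square, and conversely every binary abelian square of length 2n is a reverse shuffle square; hence the number of binary reverse shuffle squares of length 2n is binomial(2n, n). -/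
/-- A word of length `2n` is an abelian square if its second half is a rearrangement
of its first half. -/
def IsAbelianSquare {n k : ℕ} (s : Fin (2 * n) → Fin k) : Prop :=
  ∃ π : Equiv.Perm (Fin n), ∀ i : Fin n,
    s ⟨n + (i : ℕ), by have := i.isLt; omega⟩
      = s ⟨((π i : Fin n) : ℕ), by have := (π i).isLt; omega⟩

open Finset Function

theorem card_filter_eq_add_of_bijective_sumElim {α β γ : Type*} [Fintype α] [Fintype β]
    [Fintype γ] {f : α → γ} {g : β → γ} (h : Bijective (Sum.elim f g)) (p : γ → Prop)
    [DecidablePred p] :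
    #{x | p x} = #{a | p (f a)} + #{b | p (g b)} := by
  rw [← card_equiv (Equiv.ofBijective _ h) (t := {x | p x}) (s := {y | p (Sum.elim f g y)})
    (fun _ => by simp)]
  simp only [card_filter, Fintype.sum_sum_type, Sum.elim_inl, Sum.elim_inr]
  rfl

theorem bijective_sumElim_orderEmbOfFin {α : Type*} [Fintype α] [LinearOrder α] {A : Finset α}
    {a b : ℕ} (hA : #A = a) (hAc : #Aᶜ = b) :
    Bijective (Sum.elim (A.orderEmbOfFin hA) (Aᶜ.orderEmbOfFin hAc)) := by
  refine ⟨(A.orderEmbOfFin hA).injective.sumElim (Aᶜ.orderEmbOfFin hAc).injective ?_, ?_⟩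
  · intro r r' h
    exact mem_compl.1 (h ▸ Aᶜ.orderEmbOfFin_mem hAc r') (A.orderEmbOfFin_mem hA r)
  · intro x
    by_cases hx : x ∈ A
    · obtain ⟨r, hr⟩ : x ∈ Set.range (A.orderEmbOfFin hA) := by simpa using hx
      exact ⟨.inl r, hr⟩
    · obtain ⟨r, hr⟩ : x ∈ Set.range (Aᶜ.orderEmbOfFin hAc) := by simpa using hx
      exact ⟨.inr r, hr⟩

theorem StrictMono.lt_iff_lt_card_filter {n : ℕ} {β : Type*} [LinearOrder β] {f : Fin n → β}
    (hf : StrictMono f) (b : β) (r : Fin n) : f r < b ↔ (r : ℕ) < #{r' | f r' < b} := by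
  constructor
  · intro hr
    have : Iic r ⊆ ({r' | f r' < b} : Finset _) := fun r' hr' =>
      mem_filter.2 ⟨mem_univ _, (hf.monotone (mem_Iic.1 hr')).trans_lt hr⟩
    simpa using card_le_card this
  · intro hr
    by_contra hbr
    have : ({r' | f r' < b} : Finset _) ⊆ Iio r := fun r' hr' =>
      mem_Iio.2 (hf.lt_iff_lt.1 ((mem_filter.1 hr').2.trans_le (not_lt.1 hbr)))
    simpa using (card_le_card this).trans_lt' hr

theorem fin_two_eq_of_eq_one_iff {a b : Fin 2} (h : a = 1 ↔ b = 1) : a = b := by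
  revert a b; decide

theorem card_filter_eq_zero_add_card_filter_eq_one {α : Type*} [Fintype α] (t : α → Fin 2) :
    #{a | t a = 0} + #{a | t a = 1} = Fintype.card α := by
  have : ∀ c : Fin 2, c = 0 ↔ ¬ c = 1 := by decide
  simp only [this]
  rw [add_comm, card_filter_add_card_filter_not, card_univ]

theorem card_filter_card_filter_eq_one {α : Type*} [Fintype α] [DecidableEq α] (k : ℕ) :
    #{t : α → Fin 2 | #{a | t a = 1} = k} = (Fintype.card α).choose k := by
  rw [← card_univ, ← card_powersetCard]
  refine card_nbij' (fun t => ({a | t a = 1} : Finset α)) (fun A a => if a ∈ A then 1 else 0)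
    ?_ ?_ ?_ ?_
  · intro t ht
    simpa using ht
  · intro A hA
    simpa using hA
  · intro t _
    funext a
    by_cases ha : t a = 1
    · simp [ha]
    · simpa [ha] using fin_two_eq_of_eq_one_iff (a := 0) (b := t a) (by simp [ha])
  · intro A _
    ext a
    by_cases ha : a ∈ A <;> simp [ha]

section

variable {n : ℕ}

def firstHalf (i : Fin n) : Fin (2 * n) := ⟨i, by omega⟩

def secondHalf (i : Fin n) : Fin (2 * n) := ⟨n + i, by omega⟩

@[simp]
theorem val_firstHalf (i : Fin n) : (firstHalf i : ℕ) = i := rfl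

@[simp]
theorem val_secondHalf (i : Fin n) : (secondHalf i : ℕ) = n + i := rfl

theorem bijective_sumElim_firstHalf_secondHalf :
    Bijective (Sum.elim (firstHalf (n := n)) secondHalf) := by
  refine ⟨Injective.sumElim ?_ ?_ ?_, ?_⟩
  · intro i j h
    simpa [firstHalf, Fin.ext_iff] using h
  · intro i j h
    simpa [secondHalf, Fin.ext_iff] using h
  · intro i j h
    simp [firstHalf, secondHalf, Fin.ext_iff] at h
    omega
  · intro x
    by_cases hx : (x : ℕ) < n
    · exact ⟨.inl ⟨x, hx⟩, rfl⟩
    · exact ⟨.inr ⟨x - n, by omega⟩, by ext; simp [secondHalf]; omega⟩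

theorem card_firstHalf_filter (p : Fin (2 * n) → Prop) [DecidablePred p] :
    #{i | p (firstHalf i)} = #{x : Fin (2 * n) | (x : ℕ) < n ∧ p x} := by
  rw [card_filter_eq_add_of_bijective_sumElim bijective_sumElim_firstHalf_secondHalf]
  simp

theorem card_secondHalf_filter (p : Fin (2 * n) → Prop) [DecidablePred p] :
    #{i | p (secondHalf i)} = #{x : Fin (2 * n) | ¬ (x : ℕ) < n ∧ p x} := by
  rw [card_filter_eq_add_of_bijective_sumElim bijective_sumElim_firstHalf_secondHalf]
  simp

theorem isAbelianSquare_iff_card_eq {k : ℕ} (s : Fin (2 * n) → Fin k) :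
    IsAbelianSquare s ↔ ∀ c, #{i | s (secondHalf i) = c} = #{i | s (firstHalf i) = c} := by
  constructor
  · rintro ⟨π, hπ⟩ c
    exact card_equiv π fun i => by simp [show s (secondHalf i) = s (firstHalf (π i)) from hπ i]
  · intro h
    have e : ∀ c, {i // s (secondHalf i) = c} ≃ {i // s (firstHalf i) = c} := fun c =>
      Fintype.equivOfCardEq (by simpa only [Fintype.card_subtype] using h c)
    exact ⟨Equiv.ofFiberEquiv e, fun i => (Equiv.ofFiberEquiv_map e i).symm⟩

theorem isRevShuffleSquare_iff {k : ℕ} (s : Fin (2 * n) → Fin k) :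
    IsRevShuffleSquare s ↔ ∃ I J : Fin n → Fin (2 * n), StrictMono I ∧ StrictMono J ∧
      Bijective (Sum.elim I J) ∧ ∀ r, s (I r) = s (J r.rev) := by
  constructor
  · rintro ⟨I, J, hI, hJ, hIJ, hcov, hs⟩
    refine ⟨I, J, hI, hJ, ⟨hI.injective.sumElim hJ.injective hIJ, fun x => ?_⟩, hs⟩
    rcases hcov x with ⟨r, hr⟩ | ⟨r, hr⟩
    exacts [⟨.inl r, hr⟩, ⟨.inr r, hr⟩]
  · rintro ⟨I, J, hI, hJ, hIJ, hs⟩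
    refine ⟨I, J, hI, hJ, fun r r' h => ?_, fun x => ?_, hs⟩
    · exact Sum.inl_ne_inr (hIJ.injective h)
    · obtain ⟨y | y, hy⟩ := hIJ.surjective x
      exacts [.inl ⟨y, hy⟩, .inr ⟨y, hy⟩]

/-- `I` meets the first half in `{r | r < a}` and `J` in `{r | r < n - a}`, for some `a`. -/
theorem val_lt_iff_not_val_rev_lt {I J : Fin n → Fin (2 * n)} (hI : StrictMono I)
    (hJ : StrictMono J) (hIJ : Bijective (Sum.elim I J)) (r : Fin n) :
    (I r : ℕ) < n ↔ ¬ (J r.rev : ℕ) < n := by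
  have hcard : #{r | (I r : ℕ) < n} + #{r | (J r : ℕ) < n} = n := by
    rw [← card_filter_eq_add_of_bijective_sumElim hIJ (fun x => (x : ℕ) < n),
      Fin.card_filter_val_lt]
    omega
  have hIr := (Fin.val_strictMono.comp hI).lt_iff_lt_card_filter n r
  have hJr := (Fin.val_strictMono.comp hJ).lt_iff_lt_card_filter n r.rev
  simp only [comp_apply, Fin.val_rev] at hIr hJr
  omega

theorem IsRevShuffleSquare.isAbelianSquare {k : ℕ} {s : Fin (2 * n) → Fin k}
    (h : IsRevShuffleSquare s) : IsAbelianSquare s := by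
  obtain ⟨I, J, hI, hJ, hIJ, hs⟩ := (isRevShuffleSquare_iff s).1 h
  have hflip := val_lt_iff_not_val_rev_lt hI hJ hIJ
  rw [isAbelianSquare_iff_card_eq]
  intro c
  have hI_rev : #{r | (I r : ℕ) < n ∧ s (I r) = c} = #{r | ¬ (J r : ℕ) < n ∧ s (J r) = c} :=
    card_equiv Fin.revPerm fun r => by simp [hflip, hs]
  have hJ_rev : #{r | (J r : ℕ) < n ∧ s (J r) = c} = #{r | ¬ (I r : ℕ) < n ∧ s (I r) = c} :=
    card_equiv Fin.revPerm fun r => by simp [hflip, hs]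
  rw [card_firstHalf_filter (fun x => s x = c), card_secondHalf_filter (fun x => s x = c),
    card_filter_eq_add_of_bijective_sumElim hIJ, card_filter_eq_add_of_bijective_sumElim hIJ]
  omega

theorem isAbelianSquare_iff_card_eq_one (s : Fin (2 * n) → Fin 2) :
    IsAbelianSquare s ↔ #{i | s (secondHalf i) = 1} = #{i | s (firstHalf i) = 1} := by
  rw [isAbelianSquare_iff_card_eq, Fin.forall_fin_two]
  refine ⟨And.right, fun h => ⟨?_, h⟩⟩
  have hfirst := card_filter_eq_zero_add_card_filter_eq_one (s ∘ firstHalf (n := n))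
  have hsecond := card_filter_eq_zero_add_card_filter_eq_one (s ∘ secondHalf (n := n))
  simp only [comp_apply] at hfirst hsecond
  omega

def flipSecondHalf (s : Fin (2 * n) → Fin 2) (x : Fin (2 * n)) : Fin 2 :=
  if (x : ℕ) < n then s x else 1 - s x

theorem flipSecondHalf_eq_one_iff (s : Fin (2 * n) → Fin 2) (x : Fin (2 * n)) :
    flipSecondHalf s x = 1 ↔ (s x = 1 ↔ (x : ℕ) < n) := by
  by_cases hx : (x : ℕ) < n
  · simp [flipSecondHalf, hx]
  · simp only [flipSecondHalf, hx, if_false, iff_false]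
    generalize s x = c
    revert c
    decide

theorem flipSecondHalf_involutive : Involutive (flipSecondHalf (n := n)) := fun s =>
  funext fun x => fin_two_eq_of_eq_one_iff (by simp only [flipSecondHalf_eq_one_iff]; tauto)

theorem card_flipSecondHalf_eq_one_eq_iff (s : Fin (2 * n) → Fin 2) :
    #{x | flipSecondHalf s x = 1} = n ↔
      #{i | s (secondHalf i) = 1} = #{i | s (firstHalf i) = 1} := by
  have hsecond := card_filter_add_card_filter_not (s := univ) fun i => s (secondHalf i) = 1
  rw [card_filter_eq_add_of_bijective_sumElim bijective_sumElim_firstHalf_secondHalf]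
  simp only [flipSecondHalf_eq_one_iff, val_firstHalf, val_secondHalf, Fin.is_lt, iff_true,
    add_lt_iff_neg_left, not_lt_zero, iff_false]
  rw [card_univ, Fintype.card_fin] at hsecond
  omega

theorem isRevShuffleSquare_of_card_eq_one {s : Fin (2 * n) → Fin 2}
    (h : #{i | s (secondHalf i) = 1} = #{i | s (firstHalf i) = 1}) : IsRevShuffleSquare s := by
  set A : Finset (Fin (2 * n)) := {x | flipSecondHalf s x = 1}
  have hA : #A = n := (card_flipSecondHalf_eq_one_eq_iff s).2 h
  have hAc : #Aᶜ = n := by rw [card_compl, hA, Fintype.card_fin]; omega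
  rw [isRevShuffleSquare_iff]
  refine ⟨A.orderEmbOfFin hA, Aᶜ.orderEmbOfFin hAc, (A.orderEmbOfFin hA).strictMono,
    (Aᶜ.orderEmbOfFin hAc).strictMono, bijective_sumElim_orderEmbOfFin hA hAc, fun r => ?_⟩
  have hflip := val_lt_iff_not_val_rev_lt (A.orderEmbOfFin hA).strictMono
    (Aᶜ.orderEmbOfFin hAc).strictMono (bijective_sumElim_orderEmbOfFin hA hAc) r
  have hI : flipSecondHalf s (A.orderEmbOfFin hA r) = 1 :=
    (mem_filter.1 (A.orderEmbOfFin_mem hA r)).2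
  have hJ : ¬ flipSecondHalf s (Aᶜ.orderEmbOfFin hAc r.rev) = 1 := fun h' =>
    mem_compl.1 (Aᶜ.orderEmbOfFin_mem hAc r.rev) (mem_filter.2 ⟨mem_univ _, h'⟩)
  rw [flipSecondHalf_eq_one_iff] at hI hJ
  exact fin_two_eq_of_eq_one_iff (by tauto)

theorem card_filter_card_eq_one_eq_choose :
    #{s : Fin (2 * n) → Fin 2 | #{i | s (secondHalf i) = 1} = #{i | s (firstHalf i) = 1}}
      = (2 * n).choose n := by
  calc _ = #{s : Fin (2 * n) → Fin 2 | #{x | flipSecondHalf s x = 1} = n} := by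
        simp only [card_flipSecondHalf_eq_one_eq_iff]
    _ = #{t : Fin (2 * n) → Fin 2 | #{x | t x = 1} = n} :=
        card_equiv (flipSecondHalf_involutive.toPerm _) fun _ => by simp
    _ = (2 * n).choose n := by rw [card_filter_card_filter_eq_one, Fintype.card_fin]

end

open scoped Classical in
theorem binary_revShuffleSquare_iff_abelianSquare (n : ℕ) :
    (∀ s : Fin (2 * n) → Fin 2, IsRevShuffleSquare s ↔ IsAbelianSquare s) ∧
      (Finset.univ.filter
        (fun s : Fin (2 * n) → Fin 2 => IsRevShuffleSquare s)).card
        = (2 * n).choose n := by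
  have hiff (s : Fin (2 * n) → Fin 2) : IsRevShuffleSquare s ↔ IsAbelianSquare s :=
    ⟨IsRevShuffleSquare.isAbelianSquare,
      fun h => isRevShuffleSquare_of_card_eq_one ((isAbelianSquare_iff_card_eq_one s).1 h)⟩
  refine ⟨hiff, ?_⟩
  rw [← card_filter_card_eq_one_eq_choose]
  congr 1
  ext s
  simp [hiff, isAbelianSquare_iff_card_eq_one]
end
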